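/- arXiv:2012.10747 — 6 statements merged into one kernel-verified Lean document; each statement's English description precedes it below -/
import Mathlib

section
/- Let $Z_1,\dots,Z_n$ be independent standard normal random variables and $\lambda_1 \geq \dots \geq \lambda_n > 0$. Let $W_0 = \lambda_1 Z_1^2 + \dots + \lambda_n Z_n^2$, with continuous probability density function $p$ on $(0,\infty)$, and set $M(W_0) = \sup_x p(x)$, $A_1 = \sum_{k=1}^n \lambda_k^2$, $A_2 = \sum_{k=2}^n \lambda_k^2$. Then $M(W_0) \geq \frac{1}{4e^2\sqrt{2\pi}} (A_1 A_2)^{-1/4}$. -/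
/-!
Write `W₀ = R + λ₁Z₁²` with `R = ∑_{k ≥ 2} λₖZₖ²` independent of `Z₁`. Since `Var R = 2A₂`,
Chebyshev keeps `R` within `δ` of its mean with probability `≥ 1 - 2A₂/δ²`, while
`λ₁Z₁² ∈ [0, λ₁t²]` with probability `≥ 2tφ(1)` for `t ≤ 1` (`φ` the standard normal density).
By independence `W₀` then lies in an interval of length `λ₁t² + 2δ` with probability at least
the product of the two, and that probability is at most `M` times the length. Taking
`δ = 2√A₂` and `t = (A₂/A₁)^{1/4}` (so that `λ₁t² ≤ √A₂`) gives `M ≥ φ(1)/5 · (A₁A₂)^{-1/4}`,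
and `φ(1)/5` exceeds the stated constant because `4e^{3/2} ≥ 5`. If `A₂ = 0`, letting `t → 0`
forces `M = ∞`.
-/

open MeasureTheory ProbabilityTheory Real

lemma Real.Gamma_five_halves : Gamma (5 / 2) = 3 * √π / 4 := by
  rw [show (5 / 2 : ℝ) = 1 / 2 + 1 + 1 by norm_num, Gamma_add_one (by norm_num),
    Gamma_add_one (by norm_num), Gamma_one_half_eq]
  ring

lemma integral_pow_four_mul_exp_neg_half_mul_sq :
    ∫ x : ℝ, x ^ 4 * exp (-(1 / 2) * x ^ 2) = 3 * √(2 * π) := by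
  have hGamma := integral_rpow_mul_exp_neg_mul_rpow (p := 2) (q := 4) (b := 1 / 2)
    two_pos (by norm_num) (by norm_num)
  have hpow : (1 / 2 : ℝ) ^ (-((4 : ℝ) + 1) / 2) = 4 * √2 := by
    rw [one_div, inv_rpow zero_le_two, ← rpow_neg zero_le_two, sqrt_eq_rpow,
      show -(-((4 : ℝ) + 1) / 2) = 2 + 1 / 2 by norm_num, rpow_add two_pos]
    norm_num
  calc ∫ x : ℝ, x ^ 4 * exp (-(1 / 2) * x ^ 2)
      = ∫ x : ℝ, |x| ^ 4 * exp (-(1 / 2) * |x| ^ 2) := by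
        simp only [sq_abs, show ∀ x : ℝ, |x| ^ 4 = x ^ 4 from fun x => (Even.pow_abs ⟨2, rfl⟩ x)]
    _ = 2 * ∫ x in Set.Ioi 0, x ^ (4 : ℝ) * exp (-(1 / 2) * x ^ (2 : ℝ)) := by
        rw [integral_comp_abs (f := fun x => x ^ 4 * exp (-(1 / 2) * x ^ 2))]
        norm_cast
    _ = 3 * √(2 * π) := by
        rw [hGamma, hpow, show ((4 : ℝ) + 1) / 2 = 5 / 2 by norm_num, Gamma_five_halves,
          sqrt_mul zero_le_two]
        ring

lemma integral_pow_four_gaussianReal : ∫ x, x ^ 4 ∂gaussianReal 0 1 = 3 := by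
  have hnorm : ∀ x : ℝ, gaussianPDFReal 0 1 x • x ^ 4
      = (√(2 * π))⁻¹ * (x ^ 4 * exp (-(1 / 2) * x ^ 2)) := fun x => by
    simp only [gaussianPDFReal, smul_eq_mul, NNReal.coe_one, mul_one, sub_zero]
    ring_nf
  simp_rw [integral_gaussianReal_eq_integral_smul one_ne_zero, hnorm, integral_const_mul,
    integral_pow_four_mul_exp_neg_half_mul_sq]
  field_simp

lemma integral_sq_gaussianReal : ∫ x, x ^ 2 ∂gaussianReal 0 1 = 1 := by
  have h := variance_id_gaussianReal (μ := 0) (v := 1)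
  rw [variance_eq_sub (memLp_id_gaussianReal 2)] at h
  simpa using h

lemma memLp_sq_gaussianReal : MemLp (fun x : ℝ => x ^ 2) 2 (gaussianReal 0 1) := by
  rw [memLp_two_iff_integrable_sq (by fun_prop)]
  simpa [← pow_mul, Even.pow_abs ⟨2, rfl⟩] using
    (memLp_id_gaussianReal (μ := 0) (v := 1) 4).integrable_norm_pow (by norm_num)

lemma variance_sq_gaussianReal : Var[fun x : ℝ => x ^ 2; gaussianReal 0 1] = 2 := by
  rw [variance_eq_sub memLp_sq_gaussianReal]
  simp only [Pi.pow_apply, ← pow_mul, integral_pow_four_gaussianReal, integral_sq_gaussianReal]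
  norm_num

lemma gaussianPDFReal_le_of_sq_sub_le {μ : ℝ} {v : NNReal} {x y : ℝ}
    (h : (x - μ) ^ 2 ≤ (y - μ) ^ 2) : gaussianPDFReal μ v y ≤ gaussianPDFReal μ v x := by
  simp only [gaussianPDFReal]
  gcongr

lemma ofReal_mul_le_gaussianReal_Icc {t : ℝ} (ht : 0 ≤ t) :
    ENNReal.ofReal (2 * t * gaussianPDFReal 0 1 t) ≤ gaussianReal 0 1 (Set.Icc (-t) t) := by
  calc ENNReal.ofReal (2 * t * gaussianPDFReal 0 1 t)
      = ∫⁻ _ in Set.Icc (-t) t, ENNReal.ofReal (gaussianPDFReal 0 1 t) := by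
        rw [setLIntegral_const, Real.volume_Icc, ← ENNReal.ofReal_mul (gaussianPDFReal_nonneg ..)]
        ring_nf
    _ ≤ ∫⁻ x in Set.Icc (-t) t, gaussianPDF 0 1 x :=
        setLIntegral_mono' measurableSet_Icc fun x hx => ENNReal.ofReal_le_ofReal <|
          gaussianPDFReal_le_of_sq_sub_le (by simpa [sq_le_sq, abs_of_nonneg ht, abs_le] using hx)
    _ = gaussianReal 0 1 (Set.Icc (-t) t) := (gaussianReal_apply 0 one_ne_zero _).symm

lemma withDensity_Icc_le_iSup_mul (f : ℝ → ENNReal) (u v : ℝ) :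
    volume.withDensity f (Set.Icc u v) ≤ (⨆ x, f x) * ENNReal.ofReal (v - u) := by
  rw [withDensity_apply _ measurableSet_Icc, ← Real.volume_Icc, ← setLIntegral_const]
  exact lintegral_mono fun x => le_iSup f x

namespace ProbabilityTheory

variable {Ω : Type*} {mΩ : MeasurableSpace Ω} {P : Measure Ω}

lemma HasLaw.memLp_const_mul_sq {Z : Ω → ℝ} (hZ : HasLaw Z (gaussianReal 0 1) P) (c : ℝ) :
    MemLp (fun ω => c * Z ω ^ 2) 2 P := by
  have h := memLp_sq_gaussianReal.const_mul c
  rw [← hZ.map_eq, memLp_map_measure_iff (by rw [hZ.map_eq]; fun_prop) hZ.aemeasurable] at h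
  exact h

lemma HasLaw.variance_const_mul_sq {Z : Ω → ℝ} (hZ : HasLaw Z (gaussianReal 0 1) P) (c : ℝ) :
    Var[fun ω => c * Z ω ^ 2; P] = 2 * c ^ 2 := by
  rw [variance_const_mul, ← Function.comp_def (fun x : ℝ => x ^ 2) Z,
    ← variance_map (by rw [hZ.map_eq]; fun_prop) hZ.aemeasurable, hZ.map_eq,
    variance_sq_gaussianReal, mul_comm]

lemma HasLaw.measure_const_mul_sq_mem_Icc {Z : Ω → ℝ} {μ : Measure ℝ} (hZ : HasLaw Z μ P)
    {c t : ℝ} (hc : 0 < c) (ht : 0 ≤ t) :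
    P ((fun ω => c * Z ω ^ 2) ⁻¹' Set.Icc 0 (c * t ^ 2)) = μ (Set.Icc (-t) t) := by
  have hset : (fun ω => c * Z ω ^ 2) ⁻¹' Set.Icc 0 (c * t ^ 2) = Z ⁻¹' Set.Icc (-t) t := by
    ext ω
    simp only [Set.mem_preimage, Set.mem_Icc, mul_le_mul_iff_right₀ hc, sq_le_sq,
      abs_of_nonneg ht, abs_le, and_iff_right_iff_imp]
    exact fun _ => by positivity
  rw [hset, ← hZ.map_eq, Measure.map_apply_of_aemeasurable hZ.aemeasurable measurableSet_Icc]

lemma variance_sum_const_mul_sq {ι : Type*} (s : Finset ι) {Z : ι → Ω → ℝ} (c : ι → ℝ)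
    (hindep : iIndepFun Z P) (hZ : ∀ k, HasLaw (Z k) (gaussianReal 0 1) P) :
    Var[∑ k ∈ s, fun ω => c k * Z k ω ^ 2; P] = 2 * ∑ k ∈ s, c k ^ 2 := by
  rw [IndepFun.variance_sum (fun k _ => (hZ k).memLp_const_mul_sq (c k))
    fun i _ j _ hij => (hindep.comp (fun k x => c k * x ^ 2) fun k => by fun_prop).indepFun hij]
  simp only [fun k => (hZ k).variance_const_mul_sq (c k), Finset.mul_sum]

lemma IndepFun.measure_Icc_mul_le_measure_add_Icc {X Y : Ω → ℝ} (h : IndepFun X Y P)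
    (a b c d : ℝ) :
    P (X ⁻¹' Set.Icc a b) * P (Y ⁻¹' Set.Icc c d) ≤ P ((X + Y) ⁻¹' Set.Icc (a + c) (b + d)) := by
  rw [← h.measure_inter_preimage_eq_mul _ _ measurableSet_Icc measurableSet_Icc]
  refine measure_mono ?_
  rintro ω ⟨⟨hXa, hXb⟩, hYc, hYd⟩
  exact ⟨add_le_add hXa hYc, add_le_add hXb hYd⟩

lemma ofReal_one_sub_variance_div_sq_le_measure_Icc [IsProbabilityMeasure P] {X : Ω → ℝ}
    (hX : MemLp X 2 P) {δ : ℝ} (hδ : 0 < δ) :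
    ENNReal.ofReal (1 - Var[X; P] / δ ^ 2) ≤ P (X ⁻¹' Set.Icc (P[X] - δ) (P[X] + δ)) := by
  set far := {ω | δ ≤ |X ω - P[X]|}
  have hnear : farᶜ ⊆ X ⁻¹' Set.Icc (P[X] - δ) (P[X] + δ) := fun ω hω => by
    simp only [far, Set.mem_compl_iff, Set.mem_ofPred_eq, not_le, abs_sub_lt_iff] at hω
    exact ⟨by linarith, by linarith⟩
  calc ENNReal.ofReal (1 - Var[X; P] / δ ^ 2)
      = 1 - ENNReal.ofReal (Var[X; P] / δ ^ 2) := by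
        rw [ENNReal.ofReal_sub _ (by positivity [variance_nonneg X P]), ENNReal.ofReal_one]
    _ ≤ 1 - P far := tsub_le_tsub_left (meas_ge_le_variance_div_sq hX hδ) 1
    _ ≤ P farᶜ := by
        rw [tsub_le_iff_left, ← measure_univ (μ := P)]
        exact measure_univ_le_add_compl far
    _ ≤ _ := measure_mono hnear

lemma IndepFun.mul_measure_Icc_le_iSup_density_mul [IsProbabilityMeasure P] {X Y : Ω → ℝ}
    {f : ℝ → ENNReal} (hXY : IndepFun X Y P) (hX : MemLp X 2 P)
    (hsum : HasLaw (X + Y) (volume.withDensity f) P) (a b : ℝ) {δ : ℝ} (hδ : 0 < δ) :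
    ENNReal.ofReal (1 - Var[X; P] / δ ^ 2) * P (Y ⁻¹' Set.Icc a b)
      ≤ (⨆ x, f x) * ENNReal.ofReal (b - a + 2 * δ) :=
  calc ENNReal.ofReal (1 - Var[X; P] / δ ^ 2) * P (Y ⁻¹' Set.Icc a b)
      ≤ P (X ⁻¹' Set.Icc (P[X] - δ) (P[X] + δ)) * P (Y ⁻¹' Set.Icc a b) := by
        gcongr
        exact ofReal_one_sub_variance_div_sq_le_measure_Icc hX hδ
    _ ≤ P ((X + Y) ⁻¹' Set.Icc (P[X] - δ + a) (P[X] + δ + b)) :=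
        hXY.measure_Icc_mul_le_measure_add_Icc ..
    _ = volume.withDensity f (Set.Icc (P[X] - δ + a) (P[X] + δ + b)) := by
        rw [← hsum.map_eq, Measure.map_apply_of_aemeasurable hsum.aemeasurable measurableSet_Icc]
    _ ≤ (⨆ x, f x) * ENNReal.ofReal (b - a + 2 * δ) := by
        convert withDensity_Icc_le_iSup_mul f _ _ using 3
        ring

lemma ofReal_mul_le_iSup_density_mul_weighted_sum_sq {ι : Type*} [Fintype ι] [DecidableEq ι]
    {Z : ι → Ω → ℝ} {l : ι → ℝ} {f : ℝ → ENNReal} (i : ι) (hl : 0 < l i)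
    (hindep : iIndepFun Z P) (hZ : ∀ k, HasLaw (Z k) (gaussianReal 0 1) P)
    (hf : HasLaw (fun ω => ∑ k, l k * Z k ω ^ 2) (volume.withDensity f) P)
    {t : ℝ} (ht : t ∈ Set.Ioc 0 1) {δ : ℝ} (hδ : 0 < δ) :
    ENNReal.ofReal (1 - 2 * (∑ k ∈ Finset.univ.erase i, l k ^ 2) / δ ^ 2)
        * ENNReal.ofReal (2 * t * gaussianPDFReal 0 1 1)
      ≤ (⨆ x, f x) * ENNReal.ofReal (l i * t ^ 2 + 2 * δ) := by
  have := (hZ i).isProbabilityMeasure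
  set X : ι → Ω → ℝ := fun k ω => l k * Z k ω ^ 2
  set R := ∑ k ∈ Finset.univ.erase i, X k
  have hsum : HasLaw (R + X i) (volume.withDensity f) P := by
    have hW : (fun ω => ∑ k, l k * Z k ω ^ 2) = R + X i := by
      ext ω
      simp [R, X, Finset.sum_apply]
    exact hW ▸ hf
  have hRX : IndepFun R (X i) P :=
    (hindep.comp (fun k x => l k * x ^ 2) fun k => by fun_prop).indepFun_finsetSum_of_notMem₀
      (fun k => by have := (hZ k).aemeasurable; fun_prop) (Finset.notMem_erase i _)
  have hR : MemLp R 2 P := memLp_finsetSum' _ fun k _ => (hZ k).memLp_const_mul_sq (l k)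
  calc _ ≤ ENNReal.ofReal (1 - Var[R; P] / δ ^ 2) * P (X i ⁻¹' Set.Icc 0 (l i * t ^ 2)) := by
        rw [variance_sum_const_mul_sq _ l hindep hZ,
          (hZ i).measure_const_mul_sq_mem_Icc hl ht.1.le]
        gcongr ENNReal.ofReal _ * ?_
        refine (ENNReal.ofReal_le_ofReal ?_).trans (ofReal_mul_le_gaussianReal_Icc ht.1.le)
        exact mul_le_mul_of_nonneg_left
          (gaussianPDFReal_le_of_sq_sub_le (by nlinarith [ht.1, ht.2])) (by linarith [ht.1])
    _ ≤ _ := by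
      simpa using hRX.mul_measure_Icc_le_iSup_density_mul hR hsum 0 (l i * t ^ 2) hδ

end ProbabilityTheory

lemma ENNReal.eq_top_of_forall_ofReal_mul_le {M : ENNReal} {c C : ℝ} (hc : 0 < c)
    (h : ∀ t ∈ Set.Ioc (0 : ℝ) 1, ENNReal.ofReal (c * t) ≤ M * ENNReal.ofReal (C * t ^ 2)) :
    M = ⊤ := by
  by_contra hM
  set m := M.toReal
  set t := min 1 (c / (2 * (m * |C| + 1)))
  have ht : t ∈ Set.Ioc (0 : ℝ) 1 := ⟨lt_min one_pos (by positivity), min_le_left _ _⟩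
  have hct : c * t ≤ m * (C * t ^ 2) := by
    have := h t ht
    rw [← ENNReal.ofReal_toReal hM, ← ENNReal.ofReal_mul ENNReal.toReal_nonneg,
      ENNReal.ofReal_le_ofReal_iff'] at this
    exact this.resolve_right (by nlinarith [ht.1])
  have htc : t * (2 * (m * |C| + 1)) ≤ c := by
    have := min_le_right 1 (c / (2 * (m * |C| + 1)))
    rwa [le_div_iff₀ (by positivity)] at this
  nlinarith [ht.1, mul_le_mul_of_nonneg_left (le_abs_self C) (by positivity : 0 ≤ m * t ^ 2)]

lemma ofReal_div_five_mul_rpow_le_of_forall {M : ENNReal} {c lam a : ℝ} (hc : 0 < c)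
    (ha : 0 ≤ a)
    (h : ∀ t ∈ Set.Ioc (0 : ℝ) 1, ∀ δ > 0, ENNReal.ofReal (1 - 2 * a / δ ^ 2)
      * ENNReal.ofReal (2 * t * c) ≤ M * ENNReal.ofReal (lam * t ^ 2 + 2 * δ)) :
    ENNReal.ofReal (c / 5) * ENNReal.ofReal ((lam ^ 2 + a) * a) ^ (-(1 / 4 : ℝ)) ≤ M := by
  rcases ha.eq_or_lt with rfl | ha
  · have hM : M = ⊤ := ENNReal.eq_top_of_forall_ofReal_mul_le (mul_pos two_pos hc) (C := lam + 2)
      fun t ht => by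
        convert h t ht (t ^ 2) (pow_pos ht.1 2) using 2
        · simp only [mul_zero, zero_div, sub_zero, ENNReal.ofReal_one, one_mul]
          ring_nf
        · ring_nf
    simp [hM]
  set a₁ := lam ^ 2 + a
  set r := (a₁ * a) ^ (-(1 / 4 : ℝ))
  have hr : 0 < r := by positivity
  have hr4 : r ^ 4 = (a₁ * a)⁻¹ := by
    rw [← rpow_natCast, ← rpow_mul (by positivity)]
    norm_num [rpow_neg_one]
  set t := √a * r
  have ht4 : t ^ 4 = a / a₁ := by
    rw [mul_pow, hr4, show √a ^ 4 = (√a ^ 2) ^ 2 by ring, sq_sqrt ha.le]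
    field_simp
  have ht : t ∈ Set.Ioc (0 : ℝ) 1 := by
    refine ⟨by positivity, ?_⟩
    rw [← pow_le_one_iff_of_nonneg (by positivity) four_ne_zero, ht4, div_le_one (by positivity)]
    linarith [sq_nonneg lam]
  have hlen : lam * t ^ 2 + 2 * (2 * √a) ≤ 5 * √a := by
    have : (lam * t ^ 2) ^ 2 ≤ a := by
      rw [mul_pow, ← pow_mul, ht4, mul_div_assoc', div_le_iff₀ (by positivity)]
      nlinarith
    linarith [le_abs_self (lam * t ^ 2), abs_le_sqrt this]
  have hbound := h t ht (2 * √a) (by positivity)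
  rw [show 1 - 2 * a / (2 * √a) ^ 2 = 1 / 2 by rw [mul_pow, sq_sqrt ha.le]; field_simp; norm_num]
    at hbound
  have key : ENNReal.ofReal (c / 5 * r) * ENNReal.ofReal (5 * √a)
      ≤ M * ENNReal.ofReal (5 * √a) :=
    calc ENNReal.ofReal (c / 5 * r) * ENNReal.ofReal (5 * √a)
        = ENNReal.ofReal (1 / 2) * ENNReal.ofReal (2 * t * c) := by
          rw [← ENNReal.ofReal_mul (by positivity), ← ENNReal.ofReal_mul (by positivity)]
          congr 1
          ring
      _ ≤ M * ENNReal.ofReal (lam * t ^ 2 + 2 * (2 * √a)) := hbound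
      _ ≤ M * ENNReal.ofReal (5 * √a) := by gcongr
  rw [ENNReal.ofReal_rpow_of_pos (by positivity), ← ENNReal.ofReal_mul (by positivity)]
  exact (ENNReal.mul_le_mul_iff_left (by simpa using ha) ENNReal.ofReal_ne_top).1 key

lemma div_le_gaussianPDFReal_one_div_five :
    1 / (4 * exp 2 * √(2 * π)) ≤ gaussianPDFReal 0 1 1 / 5 := by
  have hexp : 5 / 2 ≤ exp 2 * exp (-(1 / 2)) := by
    rw [← exp_add]
    linarith [add_one_le_exp (2 + -(1 / 2) : ℝ)]
  have hpdf : gaussianPDFReal 0 1 1 = (√(2 * π))⁻¹ * exp (-(1 / 2)) := by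
    simp [gaussianPDFReal, neg_div]
  rw [hpdf, div_le_iff₀ (by positivity), div_mul_eq_mul_div, le_div_iff₀ (by positivity)]
  field_simp
  nlinarith [exp_pos 2]

theorem max_density_weighted_chi_square_lower_general
    {Ω : Type*} [MeasureSpace Ω]
    {n : ℕ} (hn : 0 < n) (Z : Fin n → Ω → ℝ) (l : Fin n → ℝ)
    (hpos : ∀ k, 0 < l k)
    (hindep : iIndepFun Z ℙ)
    (hgauss : ∀ k, Measure.map (Z k) ℙ = gaussianReal 0 1)
    (p : ℝ → ℝ)
    (hp_pdf : Measure.map (fun ω => ∑ k, l k * (Z k ω) ^ 2) ℙ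
        = volume.withDensity (fun x => ENNReal.ofReal (p x))) :
    ENNReal.ofReal (1 / (4 * Real.exp 2 * Real.sqrt (2 * π)))
        * ENNReal.ofReal
            ((∑ k, (l k) ^ 2) * ∑ k ∈ Finset.univ.erase ⟨0, hn⟩, (l k) ^ 2)
          ^ (-(1 / 4 : ℝ))
      ≤ ⨆ x : ℝ, ENNReal.ofReal (p x) := by
  set i₀ : Fin n := ⟨0, hn⟩
  have hZ : ∀ k, HasLaw (Z k) (gaussianReal 0 1) ℙ := fun k =>
    ⟨.of_map_ne_zero (hgauss k ▸ IsProbabilityMeasure.ne_zero _), hgauss k⟩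
  have hW : HasLaw (fun ω => ∑ k, l k * Z k ω ^ 2)
      (volume.withDensity fun x => ENNReal.ofReal (p x)) ℙ :=
    ⟨by have := fun k => (hZ k).aemeasurable; fun_prop, hp_pdf⟩
  rw [← Finset.add_sum_erase _ _ (Finset.mem_univ i₀)]
  set a₂ := ∑ k ∈ Finset.univ.erase i₀, l k ^ 2
  calc _ ≤ ENNReal.ofReal (gaussianPDFReal 0 1 1 / 5)
        * ENNReal.ofReal ((l i₀ ^ 2 + a₂) * a₂) ^ (-(1 / 4 : ℝ)) := by
        gcongr ENNReal.ofReal ?_ * _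
        exact div_le_gaussianPDFReal_one_div_five
    _ ≤ _ := ofReal_div_five_mul_rpow_le_of_forall (gaussianPDFReal_pos _ _ _ one_ne_zero)
        (Finset.sum_nonneg fun k _ => sq_nonneg (l k)) fun t ht δ hδ =>
        ofReal_mul_le_iSup_density_mul_weighted_sum_sq i₀ (hpos i₀) hindep hZ hW ht hδ

/-- Theorem 1 (lower bound): for a weighted sum `W₀ = ∑ λₖ Zₖ²` of squares of
independent standard normals with `λ₁ ≥ ⋯ ≥ λₙ > 0`, the maximum `M(W₀)` of its
continuous density `p` satisfies `M(W₀) ≥ (1/(4e²√(2π))) (A₁ A₂)^{-1/4}`. -/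
theorem max_density_weighted_chi_square_lower
    {Ω : Type*} [MeasureSpace Ω] [IsProbabilityMeasure (ℙ : Measure Ω)]
    {n : ℕ} (hn : 0 < n) (Z : Fin n → Ω → ℝ) (l : Fin n → ℝ)
    (hpos : ∀ k, 0 < l k) (hmono : Antitone l)
    (hindep : iIndepFun Z ℙ)
    (hgauss : ∀ k, Measure.map (Z k) ℙ = gaussianReal 0 1)
    (p : ℝ → ℝ) (hp_nonneg : ∀ x, 0 ≤ p x)
    (hp_zero : ∀ x ≤ 0, p x = 0)
    (hp_cont : ContinuousOn p (Set.Ioi 0))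
    (hp_pdf : Measure.map (fun ω => ∑ k, l k * (Z k ω) ^ 2) ℙ
        = volume.withDensity (fun x => ENNReal.ofReal (p x))) :
    ENNReal.ofReal (1 / (4 * Real.exp 2 * Real.sqrt (2 * π)))
        * ENNReal.ofReal
            ((∑ k, (l k) ^ 2) * ∑ k ∈ Finset.univ.erase ⟨0, hn⟩, (l k) ^ 2)
          ^ (-(1 / 4 : ℝ))
      ≤ ⨆ x : ℝ, ENNReal.ofReal (p x) :=
  max_density_weighted_chi_square_lower_general hn Z l hpos hindep hgauss p hp_pdf
end

section
/- Let $\eta$ be a real random variable with finite variance having a probability density function bounded above by $M(\eta) = \sup_x p_\eta(x)$. Then $M(\eta)^2 \, \mathrm{Var}(\eta) \geq \frac{1}{12}$. -/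
/-!
Let `ν` be the law of `η`, so `ν ≤ M • volume`. The set `{x | (x - c)² < t}` is an interval of
length `2√t`, hence `ν {x | t ≤ (x - c)²} ≥ 1 - 2M√t`. By the layer-cake formula,
`∫ (x - c)² dν ≥ ∫₀^{(2M)⁻²} (1 - 2M√t) dt = (2M)⁻² / 3 = 1 / (12 M²)`; take `c` the mean.
-/

open MeasureTheory ProbabilityTheory Real

theorem integral_one_sub_mul_sqrt {k : ℝ} (hk : 0 < k) :
    ∫ t in (0 : ℝ)..k⁻¹ ^ 2, (1 - k * √t) = k⁻¹ ^ 2 / 3 := by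
  have h_sqrt : ∫ t in (0 : ℝ)..k⁻¹ ^ 2, √t = 2 / 3 * k⁻¹ ^ 3 := by
    simp_rw [sqrt_eq_rpow]
    rw [integral_rpow (Or.inl (by norm_num)), zero_rpow (by norm_num), ← rpow_natCast,
      ← rpow_natCast, ← rpow_mul (by positivity)]
    norm_num
    ring
  rw [intervalIntegral.integral_sub intervalIntegrable_const
      (continuous_sqrt.intervalIntegrable _ _ |>.const_mul k),
    intervalIntegral.integral_const_mul, h_sqrt, intervalIntegral.integral_const]
  linear_combination (-2 / 3 * k⁻¹ ^ 2) * mul_inv_cancel₀ hk.ne'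

theorem ofReal_one_sub_mul_sqrt_le_measure {ν : Measure ℝ} [IsProbabilityMeasure ν] {M : ℝ}
    (hM : 0 ≤ M) (hν : ν ≤ ENNReal.ofReal M • volume) (c t : ℝ) :
    ENNReal.ofReal (1 - 2 * M * √t) ≤ ν {x | t ≤ (x - c) ^ 2} := by
  have h_ball : {x | t ≤ (x - c) ^ 2}ᶜ ⊆ Metric.ball c √t := by
    intro x hx
    rw [Set.mem_compl_iff, Set.mem_ofPred_eq, not_le] at hx
    rw [Metric.mem_ball, dist_eq, ← sqrt_sq_eq_abs]
    exact sqrt_lt_sqrt (sq_nonneg _) hx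
  have h_small : ν {x | t ≤ (x - c) ^ 2}ᶜ ≤ ENNReal.ofReal (2 * M * √t) :=
    calc ν {x | t ≤ (x - c) ^ 2}ᶜ ≤ ν (Metric.ball c √t) := measure_mono h_ball
      _ ≤ ENNReal.ofReal M * volume (Metric.ball c √t) := hν _
      _ = ENNReal.ofReal (2 * M * √t) := by
        rw [volume_ball, ← ENNReal.ofReal_mul hM]; ring_nf
  have hS : MeasurableSet {x : ℝ | t ≤ (x - c) ^ 2} := measurableSet_le (by fun_prop) (by fun_prop)
  rw [ENNReal.ofReal_sub _ (by positivity), ENNReal.ofReal_one, ← compl_compl {x | t ≤ (x - c) ^ 2},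
    prob_compl_eq_one_sub hS.compl]
  exact tsub_le_tsub_left h_small 1

theorem le_lintegral_sq_sub_of_le_smul_volume {ν : Measure ℝ} [IsProbabilityMeasure ν] {M : ℝ}
    (hM : 0 < M) (hν : ν ≤ ENNReal.ofReal M • volume) (c : ℝ) :
    ENNReal.ofReal ((2 * M)⁻¹ ^ 2 / 3) ≤ ∫⁻ x, ENNReal.ofReal ((x - c) ^ 2) ∂ν := by
  have hk : 0 < 2 * M := by positivity
  have h_int : IntegrableOn (fun t ↦ 1 - 2 * M * √t) (Set.Ioc 0 ((2 * M)⁻¹ ^ 2)) :=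
    (continuous_const.sub (continuous_const.mul continuous_sqrt)).integrableOn_Ioc
  have h_nonneg : 0 ≤ᵐ[volume.restrict (Set.Ioc 0 ((2 * M)⁻¹ ^ 2))] fun t ↦ 1 - 2 * M * √t := by
    filter_upwards [ae_restrict_mem measurableSet_Ioc] with t ht
    have h : 2 * M * √t ≤ 2 * M * (2 * M)⁻¹ := by
      gcongr
      exact (sqrt_le_sqrt ht.2).trans_eq (sqrt_sq (by positivity))
    rw [mul_inv_cancel₀ hk.ne'] at h
    exact sub_nonneg.2 h
  rw [lintegral_eq_lintegral_meas_le ν (ae_of_all _ fun x ↦ sq_nonneg _) (by fun_prop),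
    ← integral_one_sub_mul_sqrt hk, intervalIntegral.integral_of_le (by positivity),
    ofReal_integral_eq_lintegral_ofReal h_int h_nonneg]
  calc ∫⁻ t in Set.Ioc 0 ((2 * M)⁻¹ ^ 2), ENNReal.ofReal (1 - 2 * M * √t)
      ≤ ∫⁻ t in Set.Ioc 0 ((2 * M)⁻¹ ^ 2), ν {x | t ≤ (x - c) ^ 2} :=
        lintegral_mono fun t ↦ ofReal_one_sub_mul_sqrt_le_measure hM.le hν c t
    _ ≤ ∫⁻ t in Set.Ioi 0, ν {x | t ≤ (x - c) ^ 2} := lintegral_mono_set Set.Ioc_subset_Ioi_self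

theorem one_div_twelve_le_sq_mul_variance_of_map_le {Ω : Type*} [MeasurableSpace Ω]
    {μ : Measure Ω} [IsProbabilityMeasure μ] {X : Ω → ℝ} {M : ℝ} (hX : MemLp X 2 μ)
    (hlaw : μ.map X ≤ ENNReal.ofReal M • volume) :
    1 / 12 ≤ M ^ 2 * variance X μ := by
  have hXm : AEMeasurable X μ := hX.aestronglyMeasurable.aemeasurable
  have : IsProbabilityMeasure (μ.map X) := Measure.isProbabilityMeasure_map hXm
  have hM : 0 < M := by
    by_contra! hM
    simpa [ENNReal.ofReal_of_nonpos hM] using hlaw Set.univ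
  have h_ev : ENNReal.ofReal ((2 * M)⁻¹ ^ 2 / 3) ≤ evariance X μ := by
    rw [evariance_eq_lintegral_ofReal,
      ← lintegral_map' (f := fun x ↦ ENNReal.ofReal ((x - μ[X]) ^ 2)) (by fun_prop) hXm]
    exact le_lintegral_sq_sub_of_le_smul_volume hM hlaw _
  rw [← hX.ofReal_variance_eq, ENNReal.ofReal_le_ofReal_iff (variance_nonneg _ _)] at h_ev
  calc (1 : ℝ) / 12 = M ^ 2 * ((2 * M)⁻¹ ^ 2 / 3) := by field_simp; ring
    _ ≤ M ^ 2 * variance X μ := by gcongr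

theorem sq_max_density_mul_variance_ge_general
    {Ω : Type*} [MeasureSpace Ω] [IsProbabilityMeasure (ℙ : Measure Ω)]
    (η : Ω → ℝ) (hL2 : MemLp η 2 ℙ)
    (p : ℝ → ℝ)
    (hp_pdf : Measure.map η ℙ = volume.withDensity (fun x => ENNReal.ofReal (p x)))
    (hp_bdd : BddAbove (Set.range p)) :
    1 / 12 ≤ (⨆ x : ℝ, p x) ^ 2 * variance η ℙ := by
  refine one_div_twelve_le_sq_mul_variance_of_map_le hL2 ?_
  rw [hp_pdf, ← withDensity_const]
  exact withDensity_mono (ae_of_all _ fun x ↦ ENNReal.ofReal_le_ofReal (le_ciSup hp_bdd x))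

/-- Lemma 1 (Statulyavichus): if a real random variable `η` has finite variance and a
probability density function bounded above, with `M(η) = sup_x p_η(x)`, then
`M(η)² ⋅ Var(η) ≥ 1/12`. -/
theorem sq_max_density_mul_variance_ge
    {Ω : Type*} [MeasureSpace Ω] [IsProbabilityMeasure (ℙ : Measure Ω)]
    (η : Ω → ℝ) (hL2 : MemLp η 2 ℙ)
    (p : ℝ → ℝ) (hp_nonneg : ∀ x, 0 ≤ p x)
    (hp_pdf : Measure.map η ℙ = volume.withDensity (fun x => ENNReal.ofReal (p x)))
    (hp_bdd : BddAbove (Set.range p)) :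
    1 / 12 ≤ (⨆ x : ℝ, p x) ^ 2 * variance η ℙ :=
  sq_max_density_mul_variance_ge_general η hL2 p hp_pdf hp_bdd
end

section
/- Let $Z_1,\dots,Z_n$ be independent standard normal random variables and $\alpha_1,\dots,\alpha_n > 0$ with $\alpha_1^2 + \dots + \alpha_n^2 = 1$. Let $m$ be a positive integer with $\alpha_k^2 \leq 1/m$ for all $k$. Then the characteristic function $f(t) = \mathbb{E}\, e^{itW}$ of $W = \alpha_1 Z_1^2 + \dots + \alpha_n Z_n^2$ satisfies $|f(t)| \leq (1 + 4t^2/m)^{-m/4}$ for all $t \in \mathbb{R}$. -/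
/-!
By independence the characteristic function factors as `∏ₖ 𝔼 exp(i t αₖ Zₖ²)`, and the complex
Gaussian integral gives `|𝔼 exp(i s Z²)| = (1 + 4s²)^{-1/4}`. Since `m αₖ² ≤ 1`, Bernoulli's
inequality gives `(1 + c/m)^{m αₖ²} ≤ 1 + c αₖ²`; multiplying over `k` and using `∑ αₖ² = 1`
yields `(1 + c/m)^m ≤ ∏ₖ (1 + c αₖ²)` with `c = 4t²`.
-/

open MeasureTheory ProbabilityTheory Real

theorem norm_integral_cexp_mul_sq_gaussianReal (s : ℝ) :
    ‖∫ x, Complex.exp (Complex.I * s * x ^ 2) ∂gaussianReal 0 1‖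
      = (1 + 4 * s ^ 2) ^ (-(1 / 4 : ℝ)) := by
  set b : ℂ := (1 - 2 * s * Complex.I) / 2
  have hb : 0 < b.re := by simp [b]
  have hnorm_b : ‖b‖ = √(1 + 4 * s ^ 2) / 2 := by
    have := Complex.norm_add_mul_I 1 (-2 * s)
    push_cast at this
    rw [norm_div, Complex.norm_ofNat, sub_eq_add_neg, ← neg_mul, ← neg_mul, this]
    ring_nf
  have hdensity : ∀ x : ℝ, gaussianPDFReal 0 1 x • Complex.exp (Complex.I * s * x ^ 2)
      = ((√(2 * π))⁻¹ : ℝ) * Complex.exp (-b * x ^ 2) := by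
    intro x
    simp only [gaussianPDFReal, Complex.real_smul]
    push_cast [Complex.ofReal_exp]
    rw [mul_assoc, ← Complex.exp_add]
    simp only [b]
    ring_nf
  simp_rw [integral_gaussianReal_eq_integral_smul one_ne_zero, hdensity]
  rw [integral_const_mul, integral_gaussian_complex hb, norm_mul,
    show (1 / 2 : ℂ) = ((1 / 2 : ℝ) : ℂ) by norm_num, Complex.norm_cpow_real, norm_div,
    Complex.norm_real, Complex.norm_real, hnorm_b, Real.norm_of_nonneg pi_pos.le,
    Real.norm_of_nonneg (by positivity)]
  have hA : 0 < 1 + 4 * s ^ 2 := by positivity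
  have hfourth : √√(1 + 4 * s ^ 2) = (1 + 4 * s ^ 2) ^ (1 / 4 : ℝ) := by
    rw [sqrt_eq_rpow, sqrt_eq_rpow, ← rpow_mul hA.le]
    norm_num
  rw [← sqrt_eq_rpow, div_div_eq_mul_div, sqrt_div' _ (sqrt_nonneg _), hfourth, mul_comm π,
    rpow_neg hA.le]
  field_simp

theorem one_add_div_rpow_le_prod_one_add_mul {ι : Type*} (s : Finset ι) (a : ι → ℝ)
    (ha : ∀ i ∈ s, 0 ≤ a i) (hsum : ∑ i ∈ s, a i = 1) {r : ℝ} (hr : 0 < r)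
    (har : ∀ i ∈ s, r * a i ≤ 1) {c : ℝ} (hc : 0 ≤ c) :
    (1 + c / r) ^ r ≤ ∏ i ∈ s, (1 + c * a i) := by
  have hbase : 0 < 1 + c / r := by positivity
  calc (1 + c / r) ^ r = ∏ i ∈ s, (1 + c / r) ^ (r * a i) := by
        rw [← rpow_sum_of_pos hbase, ← Finset.mul_sum, hsum, mul_one]
    _ ≤ ∏ i ∈ s, (1 + c * a i) := by
        refine Finset.prod_le_prod (fun i _ => by positivity) fun i hi => ?_
        calc (1 + c / r) ^ (r * a i) ≤ 1 + r * a i * (c / r) :=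
              rpow_one_add_le_one_add_mul_self (by linarith [div_nonneg hc hr.le])
                (mul_nonneg hr.le (ha i hi)) (har i hi)
          _ = 1 + c * a i := by field_simp

theorem prod_one_add_mul_rpow_neg_le {ι : Type*} (s : Finset ι) (a : ι → ℝ)
    (ha : ∀ i ∈ s, 0 ≤ a i) (hsum : ∑ i ∈ s, a i = 1) {r : ℝ} (hr : 0 < r)
    (har : ∀ i ∈ s, r * a i ≤ 1) {c : ℝ} (hc : 0 ≤ c) {p : ℝ} (hp : 0 ≤ p) :
    ∏ i ∈ s, (1 + c * a i) ^ (-p) ≤ (1 + c / r) ^ (-(r * p)) := by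
  rw [finsetProd_rpow _ _ fun i hi => by have := ha i hi; positivity, neg_mul_eq_mul_neg,
    rpow_mul (by positivity)]
  exact rpow_le_rpow_of_nonpos (by positivity)
    (one_add_div_rpow_le_prod_one_add_mul s a ha hsum hr har hc) (by linarith)

theorem charFun_weighted_chi_square_bound_general
    {Ω : Type*} [MeasureSpace Ω] [IsProbabilityMeasure (ℙ : Measure Ω)]
    {n : ℕ} (Z : Fin n → Ω → ℝ) (α : Fin n → ℝ)
    (hnorm : ∑ k, (α k) ^ 2 = 1)
    (hindep : iIndepFun Z ℙ)
    (hgauss : ∀ k, Measure.map (Z k) ℙ = gaussianReal 0 1)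
    (m : ℕ) (hm : 0 < m) (hαm : ∀ k, (α k) ^ 2 ≤ 1 / m) :
    ∀ t : ℝ,
      ‖∫ ω, Complex.exp (Complex.I * (t * ∑ k, α k * (Z k ω) ^ 2 : ℝ)) ∂ℙ‖
        ≤ (1 + 4 * t ^ 2 / m) ^ (-(m / 4 : ℝ)) := by
  intro t
  have hZ : ∀ k, AEMeasurable (Z k) ℙ := fun k =>
    aemeasurable_of_map_neZero (by rw [hgauss k]; infer_instance)
  have hfactor : ∀ ω, Complex.exp (Complex.I * (t * ∑ k, α k * (Z k ω) ^ 2 : ℝ))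
      = ∏ k, Complex.exp (Complex.I * (t * α k : ℝ) * (Z k ω : ℂ) ^ 2) := by
    intro ω
    rw [← Complex.exp_sum]
    congr 1
    push_cast
    rw [Finset.mul_sum, Finset.mul_sum]
    exact Finset.sum_congr rfl fun k _ => by ring
  calc ‖∫ ω, Complex.exp (Complex.I * (t * ∑ k, α k * (Z k ω) ^ 2 : ℝ)) ∂ℙ‖
      = ‖∏ k, ∫ x, Complex.exp (Complex.I * (t * α k : ℝ) * (x : ℂ) ^ 2) ∂gaussianReal 0 1‖ := by
        have hcont : ∀ k, Continuous fun x : ℝ =>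
            Complex.exp (Complex.I * (t * α k : ℝ) * (x : ℂ) ^ 2) := fun k => by fun_prop
        simp_rw [hfactor, hindep.integral_fun_prod_comp hZ fun k => (hcont k).aestronglyMeasurable]
        congr! 2 with k
        rw [← hgauss k, integral_map (hZ k) (hcont k).aestronglyMeasurable]
    _ = ∏ k, (1 + 4 * t ^ 2 * α k ^ 2) ^ (-(1 / 4 : ℝ)) := by
        simp_rw [norm_prod, norm_integral_cexp_mul_sq_gaussianReal]
        ring_nf
    _ ≤ (1 + 4 * t ^ 2 / m) ^ (-(m / 4 : ℝ)) := by
        have hm' : (0 : ℝ) < m := Nat.cast_pos.mpr hm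
        rw [show -(m / 4 : ℝ) = -(m * (1 / 4)) by ring]
        exact prod_one_add_mul_rpow_neg_le _ _ (fun k _ => sq_nonneg _) hnorm hm'
          (fun k _ => (le_div_iff₀' hm').mp (hαm k)) (by positivity) (by norm_num)

/-- Lemma 3: if `α₁² + ⋯ + αₙ² = 1` and `αₖ² ≤ 1/m`, then the characteristic function
`f(t) = 𝔼 exp(itW)` of `W = ∑ αₖ Zₖ²` satisfies `|f(t)| ≤ (1 + 4t²/m)^{-m/4}`. -/
theorem charFun_weighted_chi_square_bound
    {Ω : Type*} [MeasureSpace Ω] [IsProbabilityMeasure (ℙ : Measure Ω)]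
    {n : ℕ} (Z : Fin n → Ω → ℝ) (α : Fin n → ℝ)
    (hpos : ∀ k, 0 < α k) (hnorm : ∑ k, (α k) ^ 2 = 1)
    (hindep : iIndepFun Z ℙ)
    (hgauss : ∀ k, Measure.map (Z k) ℙ = gaussianReal 0 1)
    (m : ℕ) (hm : 0 < m) (hαm : ∀ k, (α k) ^ 2 ≤ 1 / m) :
    ∀ t : ℝ,
      ‖∫ ω, Complex.exp (Complex.I * (t * ∑ k, α k * (Z k ω) ^ 2 : ℝ)) ∂ℙ‖
        ≤ (1 + 4 * t ^ 2 / m) ^ (-(m / 4 : ℝ)) :=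
  charFun_weighted_chi_square_bound_general Z α hnorm hindep hgauss m hm hαm
end

section
/- Let $m, n$ be positive integers with $m \leq n$, and let $t \in \mathbb{R}$ be fixed. Then for all $b_1,\dots,b_n$ with $0 \leq b_k \leq 1/m$ for each $k$ and $b_1 + \dots + b_n = 1$, one has $\sum_{k=1}^n \log(1 + 4 b_k t^2) \geq m \log(1 + 4t^2/m)$. -/
open Real

/-! With `pₖ = m bₖ ∈ [0, 1]`, Bernoulli's inequality `(1 + c) ^ p ≤ 1 + p c` for `c = 4t²/m`
bounds each term below by `pₖ log (1 + c)`, and the `pₖ` sum to `m`. -/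

theorem mul_log_one_add_le_log_one_add_mul {c p : ℝ} (hc : -1 < c) (hp0 : 0 ≤ p) (hp1 : p ≤ 1) :
    p * log (1 + c) ≤ log (1 + p * c) := by
  have hbase : 0 < 1 + c := by linarith
  rw [← log_rpow hbase]
  exact log_le_log (by positivity) (rpow_one_add_le_one_add_mul_self hc.le hp0 hp1)

theorem sum_log_ge_extreme_point_general
    {m n : ℕ} (hm : 0 < m) (t : ℝ) (b : Fin n → ℝ)
    (hb0 : ∀ k, 0 ≤ b k) (hb1 : ∀ k, b k ≤ 1 / m) (hsum : ∑ k, b k = 1) :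
    m * Real.log (1 + 4 * t ^ 2 / m) ≤ ∑ k, Real.log (1 + 4 * b k * t ^ 2) := by
  have hm' : (0 : ℝ) < m := by exact_mod_cast hm
  have hc : -1 < 4 * t ^ 2 / m := by linarith [show 0 ≤ 4 * t ^ 2 / m by positivity]
  calc (m : ℝ) * log (1 + 4 * t ^ 2 / m)
      = ∑ k, b k * m * log (1 + 4 * t ^ 2 / m) := by
        rw [← Finset.sum_mul, ← Finset.sum_mul, hsum, one_mul]
    _ ≤ ∑ k, log (1 + b k * m * (4 * t ^ 2 / m)) :=
        Finset.sum_le_sum fun k _ => mul_log_one_add_le_log_one_add_mul hc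
          (mul_nonneg (hb0 k) hm'.le) ((le_div_iff₀ hm').mp (hb1 k))
    _ = ∑ k, log (1 + 4 * b k * t ^ 2) := by
        congr! 3
        field_simp

/-- The concave function `V(b) = ∑ log(1 + 4 bₖ t²)` attains its minimum over the
polytope `Qₘ = {0 ≤ bₖ ≤ 1/m, ∑ bₖ = 1}` at an extreme point, giving
`∑ log(1 + 4 bₖ t²) ≥ m log(1 + 4t²/m)`. -/
theorem sum_log_ge_extreme_point
    {m n : ℕ} (hm : 0 < m) (hmn : m ≤ n) (t : ℝ) (b : Fin n → ℝ)
    (hb0 : ∀ k, 0 ≤ b k) (hb1 : ∀ k, b k ≤ 1 / m) (hsum : ∑ k, b k = 1) :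
    m * Real.log (1 + 4 * t ^ 2 / m) ≤ ∑ k, Real.log (1 + 4 * b k * t ^ 2) :=
  sum_log_ge_extreme_point_general hm t b hb0 hb1 hsum
end

section
/- Let $Z_1,\dots,Z_n$ be independent standard normal random variables, $\lambda_1 \geq \dots \geq \lambda_n > 0$ with $\sum_{k=1}^n \lambda_k^2 = 1$ and $\lambda_1^2 \leq 1/3$, and $a_1,\dots,a_n \in \mathbb{R}$. Then the characteristic function $f(t) = \mathbb{E}\, e^{itW_a}$ of $W_a = \sum_{k=1}^n \lambda_k (Z_k - a_k)^2$ satisfies, for all $t \in \mathbb{R}$, $|f(t)| \leq (1 + t^2)^{-3/4} \exp\!\Big\{-2\sum_{k=1}^n a_k^2 \frac{\lambda_k^2 t^2}{1 + 4\lambda_k^2 t^2}\Big\}$. -/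
/-!
By independence, the characteristic function of `W_a` is the product of the characteristic
functions of its summands `λₖ (Zₖ - aₖ)²`. Each factor is a Gaussian integral of the exponential
of a complex quadratic, of modulus `(1 + 4λₖ²t²)^{-1/4} exp(-2aₖ²λₖ²t² / (1 + 4λₖ²t²))`. It
remains to show `∏ₖ (1 + 4λₖ²t²) ≥ (1 + t²)³`: as `∑ₖ 3λₖ² = 3` with `3λₖ² ≤ 1`, Bernoulli's
inequality gives `1 + 4λₖ²t² ≥ (1 + 4t²/3)^{3λₖ²}`, and the product of the right-hand sides is
`(1 + 4t²/3)³ ≥ (1 + t²)³`.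
-/

open MeasureTheory ProbabilityTheory Real Complex

theorem Real.one_add_rpow_le_prod_one_add_mul {ι : Type*} [Fintype ι] {w : ι → ℝ} {p v : ℝ}
    (hv : -1 ≤ v) (hw₀ : ∀ k, 0 ≤ p * w k) (hw₁ : ∀ k, p * w k ≤ 1) (hsum : ∑ k, w k = 1) :
    (1 + v) ^ p ≤ ∏ k, (1 + p * w k * v) :=
  calc (1 + v) ^ p = ∏ k, (1 + v) ^ (p * w k) := by
        rw [← rpow_sum_of_nonneg (by linarith) fun k _ ↦ hw₀ k, ← Finset.mul_sum, hsum, mul_one]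
    _ ≤ ∏ k, (1 + p * w k * v) :=
        Finset.prod_le_prod (fun k _ ↦ rpow_nonneg (by linarith) _)
          fun k _ ↦ rpow_one_add_le_one_add_mul_self hv (hw₀ k) (hw₁ k)

theorem one_add_rpow_three_le_prod_one_add_four_mul {ι : Type*} [Fintype ι] {l : ι → ℝ}
    (hl : ∀ k, l k ^ 2 ≤ 1 / 3) (hsum : ∑ k, l k ^ 2 = 1) {u : ℝ} (hu : 0 ≤ u) :
    (1 + u) ^ (3 : ℝ) ≤ ∏ k, (1 + 4 * l k ^ 2 * u) :=
  calc (1 + u) ^ (3 : ℝ) ≤ (1 + 4 * u / 3) ^ (3 : ℝ) := by gcongr; linarith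
    _ ≤ ∏ k, (1 + 3 * l k ^ 2 * (4 * u / 3)) :=
        one_add_rpow_le_prod_one_add_mul (by linarith) (fun k ↦ by positivity)
          (fun k ↦ by linarith [hl k]) hsum
    _ = ∏ k, (1 + 4 * l k ^ 2 * u) := by congr with k; ring

theorem ProbabilityTheory.iIndepFun.integral_fun_prod_comp_eq_prod_integral_map
    {Ω ι 𝕜 : Type*} {mΩ : MeasurableSpace Ω} {μ : Measure Ω} [Fintype ι] [RCLike 𝕜]
    {𝓧 : ι → Type*} {m𝓧 : ∀ i, MeasurableSpace (𝓧 i)} {X : ∀ i, Ω → 𝓧 i} {f : ∀ i, 𝓧 i → 𝕜}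
    (hX : iIndepFun X μ) (mX : ∀ i, AEMeasurable (X i) μ)
    (hf : ∀ i, AEStronglyMeasurable (f i) (μ.map (X i))) :
    ∫ ω, ∏ i, f i (X i ω) ∂μ = ∏ i, ∫ x, f i x ∂(μ.map (X i)) := by
  rw [hX.integral_fun_prod_comp mX hf]
  exact Finset.prod_congr rfl fun i _ ↦ (integral_map (mX i) (hf i)).symm

theorem integral_cexp_I_mul_sq_sub_gaussianReal (c a : ℝ) :
    ∫ x, cexp (I * (c * (x - a) ^ 2 : ℝ)) ∂gaussianReal 0 1
      = (√(2 * π))⁻¹ • ((π / (1 / 2 - I * c)) ^ (1 / 2 : ℂ)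
          * cexp (I * c * a ^ 2 / (1 - 2 * I * c))) := by
  have hb : (I * c - 1 / 2).re < 0 := by simp
  have hw₀ : 1 - 2 * I * c ≠ 0 := fun h ↦ by simpa using congrArg Complex.re h
  have hdensity (x : ℝ) : gaussianPDFReal 0 1 x • cexp (I * (c * (x - a) ^ 2 : ℝ))
      = (√(2 * π))⁻¹ • cexp ((I * c - 1 / 2) * x ^ 2 + (-2 * I * c * a) * x + I * c * a ^ 2) := by
    simp only [gaussianPDFReal, NNReal.coe_one, mul_one, sub_zero, mul_smul, Complex.real_smul,
      ofReal_exp, ← Complex.exp_add]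
    congr 2
    push_cast
    ring
  rw [integral_gaussianReal_eq_integral_smul one_ne_zero, funext hdensity, integral_smul,
    integral_cexp_quadratic hb, show 4 * (I * c - 1 / 2) = -2 * (1 - 2 * I * c) by ring]
  congr 3
  · ring
  · rw [eq_div_iff hw₀, sub_mul, div_mul_eq_mul_div, mul_div_mul_right _ _ hw₀]
    ring

theorem norm_integral_cexp_I_mul_sq_sub_gaussianReal (c a : ℝ) :
    ‖∫ x, cexp (I * (c * (x - a) ^ 2 : ℝ)) ∂gaussianReal 0 1‖
      = (1 + 4 * c ^ 2) ^ (-(1 / 4 : ℝ)) * rexp (-2 * (a ^ 2 * (c ^ 2 / (1 + 4 * c ^ 2)))) := by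
  have hq : 0 < 1 + 4 * c ^ 2 := by positivity
  have hnorm : ‖(1 / 2 - I * c : ℂ)‖ = √(1 + 4 * c ^ 2) / 2 := by
    rw [Complex.norm_def, Complex.normSq_apply]
    simp only [sub_re, sub_im, mul_re, mul_im, I_re, I_im, ofReal_re, ofReal_im]
    norm_num
    rw [show 1 / 4 + c * c = (1 + 4 * c ^ 2) / 2 ^ 2 by ring,
      sqrt_div' _ (by norm_num), sqrt_sq (by norm_num)]
  have hre : (I * c * a ^ 2 / (1 - 2 * I * c)).re
      = -2 * (a ^ 2 * (c ^ 2 / (1 + 4 * c ^ 2))) := by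
    simp only [← ofReal_pow, div_re, mul_re, I_re, ofReal_re, zero_mul, I_im, ofReal_im, mul_zero,
      sub_self, mul_im, one_mul, zero_add, sub_re, one_re, re_ofNat, im_ofNat, mul_one, add_zero,
      sub_zero, normSq_apply, sub_im, one_im, zero_sub, mul_neg, neg_mul, neg_neg, zero_div]
    field_simp
    ring
  have hsqrt : (π / (√(1 + 4 * c ^ 2) / 2)) ^ (1 / 2 : ℝ)
      = √(2 * π) * (1 + 4 * c ^ 2) ^ (-(1 / 4 : ℝ)) := by
    rw [div_div_eq_mul_div, div_rpow (by positivity) (by positivity), ← sqrt_eq_rpow,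
      sqrt_eq_rpow (1 + 4 * c ^ 2), ← rpow_mul hq.le, mul_comm π, rpow_neg hq.le, div_eq_mul_inv]
    norm_num
  have hcpow := norm_cpow_real (π / (1 / 2 - I * c)) (1 / 2)
  push_cast at hcpow
  rw [integral_cexp_I_mul_sq_sub_gaussianReal, norm_smul, norm_mul, Complex.norm_exp, hre, hcpow,
    norm_div, hnorm, Complex.norm_real, norm_of_nonneg pi_pos.le, hsqrt, norm_inv,
    norm_of_nonneg (by positivity), ← mul_assoc, ← mul_assoc, inv_mul_cancel₀ (by positivity),
    one_mul]

theorem integral_cexp_I_mul_sum_sq_sub_of_iIndepFun_gaussianReal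
    {Ω ι : Type*} {mΩ : MeasurableSpace Ω} {μ : Measure Ω} [Fintype ι] {Z : ι → Ω → ℝ}
    (hindep : iIndepFun Z μ) (hgauss : ∀ k, μ.map (Z k) = gaussianReal 0 1) (c a : ι → ℝ) :
    ∫ ω, cexp (I * (∑ k, c k * (Z k ω - a k) ^ 2 : ℝ)) ∂μ
      = ∏ k, ∫ x, cexp (I * (c k * (x - a k) ^ 2 : ℝ)) ∂gaussianReal 0 1 := by
  have hZ (k : ι) : AEMeasurable (Z k) μ :=
    aemeasurable_of_map_neZero (by rw [hgauss k]; infer_instance)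
  simp_rw [ofReal_sum, Finset.mul_sum, Complex.exp_sum]
  rw [hindep.integral_fun_prod_comp_eq_prod_integral_map
    (f := fun k x ↦ cexp (I * (c k * (x - a k) ^ 2 : ℝ))) hZ
    fun k ↦ (by fun_prop : Continuous _).aestronglyMeasurable]
  simp_rw [hgauss]

/-- If `λ₁ ≥ ⋯ ≥ λₙ > 0`, `∑ λₖ² = 1` and `λ₁² ≤ 1/3`, then the characteristic function
of `W_a = ∑ λₖ (Zₖ - aₖ)²` satisfies
`|f(t)| ≤ (1 + t²)^{-3/4} exp(-2 ∑ aₖ² λₖ² t²/(1 + 4λₖ² t²))`. -/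
theorem charFun_noncentral_weighted_chi_square_bound
    {Ω : Type*} [MeasureSpace Ω] [IsProbabilityMeasure (ℙ : Measure Ω)]
    {n : ℕ} (hn : 0 < n) (Z : Fin n → Ω → ℝ) (l : Fin n → ℝ) (a : Fin n → ℝ)
    (hpos : ∀ k, 0 < l k) (hmono : Antitone l)
    (hnorm : ∑ k, (l k) ^ 2 = 1) (hl1 : (l ⟨0, hn⟩) ^ 2 ≤ 1 / 3)
    (hindep : iIndepFun Z ℙ)
    (hgauss : ∀ k, Measure.map (Z k) ℙ = gaussianReal 0 1) :
    ∀ t : ℝ,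
      ‖∫ ω, Complex.exp (Complex.I * (t * ∑ k, l k * (Z k ω - a k) ^ 2 : ℝ)) ∂ℙ‖
        ≤ (1 + t ^ 2) ^ (-(3 / 4 : ℝ))
            * Real.exp (-2 * ∑ k, (a k) ^ 2
                * ((l k) ^ 2 * t ^ 2 / (1 + 4 * (l k) ^ 2 * t ^ 2))) := by
  intro t
  have hl (k : Fin n) : l k ^ 2 ≤ 1 / 3 :=
    (pow_le_pow_left₀ (hpos k).le (hmono (Nat.zero_le k.val)) 2).trans hl1
  have hscale (ω : Ω) : t * ∑ k, l k * (Z k ω - a k) ^ 2 = ∑ k, t * l k * (Z k ω - a k) ^ 2 := by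
    simp only [Finset.mul_sum, mul_assoc]
  simp_rw [hscale]
  calc _ = ∏ k, (1 + 4 * l k ^ 2 * t ^ 2) ^ (-(1 / 4 : ℝ))
        * rexp (-2 * (a k ^ 2 * (l k ^ 2 * t ^ 2 / (1 + 4 * l k ^ 2 * t ^ 2)))) := by
        rw [integral_cexp_I_mul_sum_sq_sub_of_iIndepFun_gaussianReal hindep hgauss, norm_prod]
        congr with k
        rw [norm_integral_cexp_I_mul_sq_sub_gaussianReal]
        ring_nf
    _ = (∏ k, (1 + 4 * l k ^ 2 * t ^ 2)) ^ (-(1 / 4 : ℝ))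
        * rexp (-2 * ∑ k, a k ^ 2 * (l k ^ 2 * t ^ 2 / (1 + 4 * l k ^ 2 * t ^ 2))) := by
        rw [Finset.prod_mul_distrib, finsetProd_rpow _ _ fun k _ ↦ by positivity, ← Real.exp_sum,
          Finset.mul_sum]
    _ ≤ ((1 + t ^ 2) ^ (3 : ℝ)) ^ (-(1 / 4 : ℝ))
        * rexp (-2 * ∑ k, a k ^ 2 * (l k ^ 2 * t ^ 2 / (1 + 4 * l k ^ 2 * t ^ 2))) := by
        gcongr ?_ * _
        exact rpow_le_rpow_of_nonpos (by positivity)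
          (one_add_rpow_three_le_prod_one_add_four_mul hl hnorm (sq_nonneg t)) (by norm_num)
    _ = _ := by rw [← rpow_mul (by positivity)]; norm_num
end

section
/- For every $B \geq 0$, the integral $I(B) = \int_0^\infty (1 + t^2)^{-3/4} e^{-B t^2} \, dt$ satisfies $I(B) \leq \frac{3\sqrt{2}}{\sqrt{1 + B}}$. -/
/-!
Proof idea: for `B ≤ 1` drop the Gaussian factor; `∫₀^∞ (1 + t²)^{-3/4} dt ≤ 1 + ∫₁^∞ t^{-3/2} dt = 3`,
while the right-hand side is at least `3`. For `B ≥ 1` drop the algebraic factor; the half Gaussian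
integral `√(π/B)/2` is at most `√(π/2)/√(1 + B)` because `(1 + B)/B ≤ 2`.
-/

open MeasureTheory Real Set

namespace OneAddSqRpowNeg

variable {s : ℝ}

lemma le_one (hs : 0 ≤ s) (t : ℝ) : (1 + t ^ 2) ^ (-s) ≤ 1 :=
  rpow_le_one_of_one_le_of_nonpos (by nlinarith [sq_nonneg t]) (by linarith)

lemma le_rpow (hs : 0 ≤ s) {t : ℝ} (ht : 0 < t) : (1 + t ^ 2) ^ (-s) ≤ t ^ (-2 * s) := by
  calc (1 + t ^ 2) ^ (-s) ≤ (t ^ 2) ^ (-s) :=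
        rpow_le_rpow_of_nonpos (by positivity) (by linarith) (by linarith)
    _ = t ^ (-2 * s) := by
        rw [← rpow_natCast t 2, ← rpow_mul ht.le]
        ring_nf

lemma integrable (hs : 1 / 2 < s) : Integrable fun t : ℝ ↦ (1 + t ^ 2) ^ (-s) := by
  have h := integrable_rpow_neg_one_add_norm_sq (E := ℝ) (μ := volume) (r := 2 * s)
    (by simp only [Module.finrank_self, Nat.cast_one]; linarith)
  convert h using 3 with t
  · rw [norm_eq_abs, sq_abs]
  · ring

lemma setIntegral_Ioi_zero_le (hs : 1 / 2 < s) :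
    ∫ t in Ioi (0 : ℝ), (1 + t ^ 2) ^ (-s) ≤ 1 + 1 / (2 * s - 1) := by
  have hint := integrable (s := s) hs
  have hsplit : ∫ t in Ioi (0 : ℝ), (1 + t ^ 2) ^ (-s)
      = (∫ t in Ioc (0 : ℝ) 1, (1 + t ^ 2) ^ (-s)) + ∫ t in Ioi (1 : ℝ), (1 + t ^ 2) ^ (-s) := by
    rw [← Ioc_union_Ioi_eq_Ioi zero_le_one]
    exact setIntegral_union Ioc_disjoint_Ioi_same measurableSet_Ioi
      hint.integrableOn hint.integrableOn
  have hnear : ∫ t in Ioc (0 : ℝ) 1, (1 + t ^ 2) ^ (-s) ≤ 1 := by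
    calc ∫ t in Ioc (0 : ℝ) 1, (1 + t ^ 2) ^ (-s) ≤ ∫ _ in Ioc (0 : ℝ) 1, (1 : ℝ) :=
          setIntegral_mono_on hint.integrableOn (integrableOn_const (by simp)) measurableSet_Ioc
            fun t _ ↦ le_one (by linarith) t
      _ = 1 := by simp
  have htail : ∫ t in Ioi (1 : ℝ), (1 + t ^ 2) ^ (-s) ≤ 1 / (2 * s - 1) := by
    have hexp : -2 * s < -1 := by linarith
    calc ∫ t in Ioi (1 : ℝ), (1 + t ^ 2) ^ (-s) ≤ ∫ t in Ioi (1 : ℝ), t ^ (-2 * s) :=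
          setIntegral_mono_on hint.integrableOn (integrableOn_Ioi_rpow_of_lt hexp one_pos)
            measurableSet_Ioi fun t ht ↦ le_rpow (by linarith) (one_pos.trans ht)
      _ = 1 / (2 * s - 1) := by
          rw [integral_Ioi_rpow_of_lt hexp one_pos, one_rpow,
            show -2 * s + 1 = -(2 * s - 1) by ring, neg_div_neg_eq]
  linarith

end OneAddSqRpowNeg

section GaussianWeight

variable {g : ℝ → ℝ} {B : ℝ}

lemma setIntegral_mul_exp_neg_mul_sq_le_setIntegral (hB : 0 ≤ B) (hg0 : ∀ t, 0 ≤ g t)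
    (hg : IntegrableOn g (Ioi 0)) :
    ∫ t in Ioi (0 : ℝ), g t * exp (-B * t ^ 2) ≤ ∫ t in Ioi (0 : ℝ), g t := by
  refine integral_mono_of_nonneg (.of_forall fun t ↦ mul_nonneg (hg0 t) (exp_nonneg _)) hg
    (.of_forall fun t ↦ mul_le_of_le_one_right (hg0 t) ?_)
  rw [exp_le_one_iff]
  nlinarith [sq_nonneg t]

lemma setIntegral_mul_exp_neg_mul_sq_le_gaussian (hB : 0 < B) (hg0 : ∀ t, 0 ≤ g t)
    (hg1 : ∀ t, g t ≤ 1) :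
    ∫ t in Ioi (0 : ℝ), g t * exp (-B * t ^ 2) ≤ √(π / B) / 2 := by
  rw [← integral_gaussian_Ioi]
  exact integral_mono_of_nonneg (.of_forall fun t ↦ mul_nonneg (hg0 t) (exp_nonneg _))
    (integrable_exp_neg_mul_sq hB).integrableOn
    (.of_forall fun t ↦ mul_le_of_le_one_left (exp_nonneg _) (hg1 t))

end GaussianWeight

lemma three_le_three_mul_sqrt_two_div_sqrt {B : ℝ} (hB : 0 ≤ B) (hB1 : B ≤ 1) :
    3 ≤ 3 * √2 / √(1 + B) := by
  rw [le_div_iff₀ (by positivity)]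
  gcongr
  linarith

lemma sqrt_pi_div_two_le_three_mul_sqrt_two_div_sqrt {B : ℝ} (hB1 : 1 ≤ B) :
    √(π / B) / 2 ≤ 3 * √2 / √(1 + B) := by
  have hB : 0 < B := one_pos.trans_le hB1
  have hlhs : √(π / B) / 2 = √(π / (4 * B)) := by
    rw [sqrt_div' _ (by positivity : 0 ≤ 4 * B), sqrt_mul' _ hB.le, sqrt_div' _ hB.le,
      show (4 : ℝ) = 2 ^ 2 by norm_num, sqrt_sq zero_le_two]
    ring
  have hrhs : 3 * √2 / √(1 + B) = √(18 / (1 + B)) := by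
    rw [sqrt_div' _ (by positivity : 0 ≤ 1 + B), show (18 : ℝ) = 3 ^ 2 * 2 by norm_num,
      sqrt_mul' _ zero_le_two, sqrt_sq zero_le_three]
  rw [hlhs, hrhs]
  apply sqrt_le_sqrt
  rw [div_le_div_iff₀ (by positivity) (by positivity)]
  nlinarith [pi_le_four]

/-- For every `B ≥ 0`, `I(B) = ∫₀^∞ (1 + t²)^{-3/4} e^{-Bt²} dt ≤ 3√2/√(1 + B)`. -/
theorem integral_bound_I
    (B : ℝ) (hB : 0 ≤ B) :
    (∫ t in Set.Ioi (0 : ℝ), (1 + t ^ 2) ^ (-(3 / 4 : ℝ)) * Real.exp (-B * t ^ 2))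
      ≤ 3 * Real.sqrt 2 / Real.sqrt (1 + B) := by
  have hg0 : ∀ t : ℝ, 0 ≤ (1 + t ^ 2) ^ (-(3 / 4 : ℝ)) := fun t ↦ by positivity
  rcases le_total B 1 with hB1 | hB1
  · calc _ ≤ ∫ t in Ioi (0 : ℝ), (1 + t ^ 2) ^ (-(3 / 4 : ℝ)) :=
          setIntegral_mul_exp_neg_mul_sq_le_setIntegral hB hg0
            (OneAddSqRpowNeg.integrable (by norm_num)).integrableOn
      _ ≤ 1 + 1 / (2 * (3 / 4) - 1) := OneAddSqRpowNeg.setIntegral_Ioi_zero_le (by norm_num)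
      _ = 3 := by norm_num
      _ ≤ _ := three_le_three_mul_sqrt_two_div_sqrt hB hB1
  · calc _ ≤ √(π / B) / 2 :=
          setIntegral_mul_exp_neg_mul_sq_le_gaussian (one_pos.trans_le hB1) hg0
            (OneAddSqRpowNeg.le_one (by norm_num))
      _ ≤ _ := sqrt_pi_div_two_le_three_mul_sqrt_two_div_sqrt hB1
end
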